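/- Let ε ~ N(0,1) be independent of the J-dimensional standard normal vector D = (D₁, …, D_J)ᵀ ~ N(0_J, I_J), let a ≥ 0, and let v ≥ 0 and c ≥ 0 be real numbers. Then for every t ≥ 0, P( |v^{1/2} ε + c D₁| ≤ t | DᵀD ≥ a ) ≤ P( v^{1/2} |ε| ≤ t ); that is, a N(0, v) random variable is more peaked than the convolution v^{1/2} ε + c ℒ′, with ℒ′ ~ D₁ | {DᵀD ≥ a} independent of ε. -/

import Mathlib

/-!
One-dimensional Anderson inequality: a density that is even and decreasing in `|x|` gives an
interval of fixed length the most mass when the interval is centred at `0`, since the part of the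
shifted interval beyond the centred one can be reflected into the part it gave up, onto points
closer to the origin. Given `D`, the variable `√v ε + c D₁` is `√v ε` shifted by the constant
`c D₁`, so every slice of the conditional probability is at most `P(√v |ε| ≤ t)`, and averaging
over the conditioning event `{DᵀD ≥ a}` keeps this bound.
-/

open MeasureTheory ProbabilityTheory Set Metric
open scoped ProbabilityTheory Real NNReal ENNReal

/-- The standard Gaussian measure on `ℝ^J`: the product of `J` standard normals. -/
noncomputable def stdGaussian (J : ℕ) : Measure (Fin J → ℝ) :=
  Measure.pi (fun _ => gaussianReal 0 1)

instance (J : ℕ) : IsProbabilityMeasure (_root_.stdGaussian J) := by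
  unfold _root_.stdGaussian; infer_instance

/-- The joint law of `(ε, D)` with `ε ~ N(0,1)` independent of the standard normal vector
`D ~ N(0_J, I_J)`. -/
noncomputable def epsD (J : ℕ) : Measure (ℝ × (Fin J → ℝ)) :=
  (gaussianReal 0 1).prod (_root_.stdGaussian J)

theorem integral_shifted_interval_le_of_nonneg {f : ℝ → ℝ} (hf_int : Integrable f)
    (hf : ∀ x y, |x| ≤ |y| → f y ≤ f x) {m L : ℝ} (hm : 0 ≤ m) (hL : 0 ≤ L) :
    ∫ x in (m - L)..(m + L), f x ≤ ∫ x in (-L)..L, f x := by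
  have hII : ∀ a b, IntervalIntegrable f volume a b := fun _ _ => hf_int.intervalIntegrable
  -- reflecting `x ↦ x - 2L` moves `[L, m + L]` onto `[-L, m - L]`, closer to the origin
  have reflect : ∫ x in L..(m + L), f x ≤ ∫ x in (-L)..(m - L), f x :=
    calc ∫ x in L..(m + L), f x
        ≤ ∫ x in L..(m + L), f (x - 2 * L) := by
          refine intervalIntegral.integral_mono_on (by linarith) (hII _ _)
            (hf_int.comp_sub_right _).intervalIntegrable fun x hx => hf _ _ ?_
          rw [abs_of_nonneg (by linarith [hx.1] : 0 ≤ x), abs_le]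
          constructor <;> linarith [hx.1]
      _ = ∫ x in (-L)..(m - L), f x := by
          rw [intervalIntegral.integral_comp_sub_right]; ring_nf
  rw [← intervalIntegral.integral_add_adjacent_intervals (hII (m - L) (-L)) (hII (-L) (m + L)),
    ← intervalIntegral.integral_add_adjacent_intervals (hII (-L) L) (hII L (m + L)),
    intervalIntegral.integral_symm (-L) (m - L)]
  linarith

theorem integral_shifted_interval_le {f : ℝ → ℝ} (hf_int : Integrable f)
    (hf : ∀ x y, |x| ≤ |y| → f y ≤ f x) (m : ℝ) {L : ℝ} (hL : 0 ≤ L) :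
    ∫ x in (m - L)..(m + L), f x ≤ ∫ x in (-L)..L, f x := by
  rcases le_total 0 m with hm | hm
  · exact integral_shifted_interval_le_of_nonneg hf_int hf hm hL
  · have hf_even : (fun x => f (-x)) = f := funext fun x => le_antisymm
      (hf _ _ (abs_neg x).ge) (hf _ _ (abs_neg x).le)
    calc ∫ x in (m - L)..(m + L), f x
        = ∫ x in (-m - L)..(-m + L), f (-x) := by
          rw [intervalIntegral.integral_comp_neg]; ring_nf
      _ = ∫ x in (-m - L)..(-m + L), f x := by rw [hf_even]
      _ ≤ ∫ x in (-L)..L, f x := integral_shifted_interval_le_of_nonneg hf_int hf (by linarith) hL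

theorem gaussianPDFReal_zero_le_of_abs_le (v : ℝ≥0) {x y : ℝ} (h : |x| ≤ |y|) :
    gaussianPDFReal 0 v y ≤ gaussianPDFReal 0 v x := by
  simp only [gaussianPDFReal_def, sub_zero]
  gcongr _ * Real.exp (-?_ / _)
  exact sq_le_sq.2 h

theorem gaussianReal_closedBall_le (v : ℝ≥0) (m t : ℝ) :
    gaussianReal 0 v (closedBall m t) ≤ gaussianReal 0 v (closedBall 0 t) := by
  rcases lt_or_ge t 0 with ht | ht
  · simp [closedBall_eq_empty.2 ht]
  rcases eq_or_ne v 0 with rfl | hv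
  · rw [gaussianReal_zero_var, Measure.dirac_apply_of_mem (mem_closedBall_self ht)]
    exact prob_le_one
  rw [gaussianReal_apply_eq_integral 0 hv, gaussianReal_apply_eq_integral 0 hv,
    Real.closedBall_eq_Icc, Real.closedBall_eq_Icc, integral_Icc_eq_integral_Ioc,
    integral_Icc_eq_integral_Ioc, ← intervalIntegral.integral_of_le (by linarith),
    ← intervalIntegral.integral_of_le (by linarith), zero_sub, zero_add]
  exact ENNReal.ofReal_le_ofReal <| integral_shifted_interval_le (integrable_gaussianPDFReal 0 v)
    (fun _ _ => gaussianPDFReal_zero_le_of_abs_le v) m ht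

theorem gaussianReal_abs_mul_add_le (v : ℝ≥0) (s m t : ℝ) :
    gaussianReal 0 v {x | |s * x + m| ≤ t} ≤ gaussianReal 0 v {x | |s * x| ≤ t} := by
  have hmap : ∀ k : ℝ, gaussianReal 0 v {x | |s * x + k| ≤ t}
      = (gaussianReal 0 v).map (s * ·) (closedBall (-k) t) := fun k => by
    rw [Measure.map_apply (measurable_const_mul s) measurableSet_closedBall]
    congr 1; ext x; simp [Real.dist_eq]
  calc gaussianReal 0 v {x | |s * x + m| ≤ t}
      = (gaussianReal 0 v).map (s * ·) (closedBall (-m) t) := hmap m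
    _ ≤ (gaussianReal 0 v).map (s * ·) (closedBall 0 t) := by
      rw [gaussianReal_map_const_mul, mul_zero]
      exact gaussianReal_closedBall_le _ _ _
    _ = gaussianReal 0 v {x | |s * x| ≤ t} := by simpa using (hmap 0).symm

theorem cond_prod_snd_le_of_slice_le {α β : Type*} [MeasurableSpace α] [MeasurableSpace β]
    {μ : Measure α} [IsProbabilityMeasure μ] {ν : Measure β} [SFinite ν]
    {S : Set β} (hS : MeasurableSet S) {E : Set (α × β)} (hE : MeasurableSet E) {r : ℝ≥0∞}
    (h : ∀ y ∈ S, μ ((·, y) ⁻¹' E) ≤ r) :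
    (μ.prod ν)[|Prod.snd ⁻¹' S] E ≤ r := by
  have hcond : (μ.prod ν) (Prod.snd ⁻¹' S) = ν S := by
    rw [← univ_prod, Measure.prod_prod, measure_univ, one_mul]
  have hinter : (μ.prod ν) (Prod.snd ⁻¹' S ∩ E) ≤ ν S * r := by
    rw [Measure.prod_apply_symm ((measurable_snd hS).inter hE), mul_comm,
      ← lintegral_indicator_const hS]
    refine lintegral_mono fun y => ?_
    by_cases hy : y ∈ S
    · simpa [indicator_of_mem hy] using (measure_mono inter_subset_right).trans (h y hy)
    · simp [hy, preimage_preimage]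
  calc (μ.prod ν)[|Prod.snd ⁻¹' S] E
      = (ν S)⁻¹ * (μ.prod ν) (Prod.snd ⁻¹' S ∩ E) := by rw [cond_apply (measurable_snd hS), hcond]
    _ ≤ (ν S)⁻¹ * (ν S * r) := by gcongr
    _ = ((ν S)⁻¹ * ν S) * r := (mul_assoc _ _ _).symm
    _ ≤ r := mul_le_of_le_one_left zero_le (ENNReal.inv_mul_le_one (ν S))

theorem normal_morePeaked_than_convolution_truncated_ge_general
    (J : ℕ) (hJ : 0 < J) (a : ℝ)
    (v c : ℝ) (t : ℝ) :
    (epsD J)[|{p | a ≤ ∑ i, (p.2 i) ^ 2}]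
        {p | |Real.sqrt v * p.1 + c * p.2 ⟨0, hJ⟩| ≤ t}
      ≤ gaussianReal 0 1 {y : ℝ | Real.sqrt v * |y| ≤ t} := by
  have hS : MeasurableSet {y : Fin J → ℝ | a ≤ ∑ i, y i ^ 2} :=
    measurableSet_le measurable_const (by fun_prop)
  have hE : MeasurableSet {p : ℝ × (Fin J → ℝ) | |√v * p.1 + c * p.2 ⟨0, hJ⟩| ≤ t} :=
    measurableSet_le (by fun_prop) measurable_const
  have hrhs : {y : ℝ | √v * |y| ≤ t} = {x | |√v * x| ≤ t} := by
    simp [abs_mul, abs_of_nonneg (Real.sqrt_nonneg v)]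
  rw [hrhs]
  exact cond_prod_snd_le_of_slice_le hS hE fun y _ =>
    gaussianReal_abs_mul_add_le 1 √v (c * y ⟨0, hJ⟩) t

/-- For `v ≥ 0`, `c ≥ 0`, and `a ≥ 0`, a `N(0, v)` random variable is more peaked than the
convolution `v^{1/2} ε + c ℒ′`, with `ℒ′ ~ D₁ | {DᵀD ≥ a}` independent of `ε ~ N(0,1)`:
for `t ≥ 0`, `P(|v^{1/2} ε + c D₁| ≤ t | DᵀD ≥ a) ≤ P(v^{1/2}|ε| ≤ t)`. -/
theorem normal_morePeaked_than_convolution_truncated_ge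
    (J : ℕ) (hJ : 0 < J) (a : ℝ) (ha : 0 ≤ a)
    (v c : ℝ) (hv : 0 ≤ v) (hc : 0 ≤ c) (t : ℝ) (ht : 0 ≤ t) :
    (epsD J)[|{p | a ≤ ∑ i, (p.2 i) ^ 2}]
        {p | |Real.sqrt v * p.1 + c * p.2 ⟨0, hJ⟩| ≤ t}
      ≤ gaussianReal 0 1 {y : ℝ | Real.sqrt v * |y| ≤ t} :=
  normal_morePeaked_than_convolution_truncated_ge_general J hJ a v c t
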